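/- arXiv:1511.05057 — 7 statements merged into one kernel-verified Lean document; each statement's English description precedes it below -/
import Mathlib

section
/- For all integers m, n ≥ 2, the inequality C(n+m-1, m) < m^(n-1) holds, unless n = 2, or (n,m) ∈ {(3,2), (4,2), (3,3)}. -/
lemma binom_step (m k : ℕ) (hm : 2 ≤ m) (hk : 1 ≤ k)
    (ih : Nat.choose (k + m) m < m ^ k) :
    Nat.choose (k + 1 + m) m < m ^ (k + 1) := by
  have h2 : Nat.choose (k + m) k = Nat.choose (k + m) m := by
    have h := Nat.choose_symm (Nat.le_add_right k m)
    have he : k + m - k = m := by omega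
    rw [he] at h
    exact h.symm
  have h4 : Nat.choose (k + 1 + m) (k + 1) = Nat.choose (k + 1 + m) m := by
    have h := Nat.choose_symm (show k + 1 ≤ k + 1 + m by omega)
    have he : k + 1 + m - (k + 1) = m := by omega
    rw [he] at h
    exact h.symm
  have key : (k + m + 1) * Nat.choose (k + m) m = Nat.choose (k + 1 + m) m * (k + 1) := by
    have h1 := Nat.add_one_mul_choose_eq (k + m) k
    rw [h2] at h1
    have h3 : k + m + 1 = k + 1 + m := by omega
    calc (k + m + 1) * Nat.choose (k + m) m
        = Nat.choose (k + m + 1) (k + 1) * (k + 1) := h1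
      _ = Nat.choose (k + 1 + m) m * (k + 1) := by rw [h3, h4]
  have hlt : Nat.choose (k + 1 + m) m * (k + 1) < m ^ (k + 1) * (k + 1) := by
    rw [← key]
    calc (k + m + 1) * Nat.choose (k + m) m
        < (k + m + 1) * m ^ k := Nat.mul_lt_mul_of_pos_left ih (by omega)
      _ ≤ ((k + 1) * m) * m ^ k := by
          apply Nat.mul_le_mul_right
          nlinarith
      _ = m ^ (k + 1) * (k + 1) := by ring
  exact Nat.lt_of_mul_lt_mul_right hlt

lemma binom_aux (m : ℕ) (hm : 2 ≤ m) (k0 : ℕ) (hk0 : 1 ≤ k0)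
    (hbase : Nat.choose (k0 + m) m < m ^ k0) :
    ∀ k, k0 ≤ k → Nat.choose (k + m) m < m ^ k := by
  intro k hk
  induction k, hk using Nat.le_induction with
  | base => exact hbase
  | succ k hk ih => exact binom_step m k hm (by omega) ih

/-- For all integers m, n ≥ 2, C(n+m-1, m) < m^(n-1), unless n = 2 or
(n,m) ∈ {(3,2), (4,2), (3,3)}. -/
theorem binom_lt_pow (m n : ℕ) (hm : 2 ≤ m) (hn : 2 ≤ n) (h2 : n ≠ 2)
    (h32 : (n, m) ≠ (3, 2)) (h42 : (n, m) ≠ (4, 2)) (h33 : (n, m) ≠ (3, 3)) :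
    Nat.choose (n + m - 1) m < m ^ (n - 1) := by
  have hrw : n + m - 1 = (n - 1) + m := by omega
  rw [hrw]
  set k := n - 1 with hkdef
  rcases Nat.lt_or_ge m 4 with hm4 | hm4
  · interval_cases m
    · -- m = 2
      have hn3 : n ≠ 3 := by intro h; exact h32 (by simp [h])
      have hn4 : n ≠ 4 := by intro h; exact h42 (by simp [h])
      exact binom_aux 2 (by norm_num) 4 (by norm_num) (by decide) k (by omega)
    · -- m = 3
      have hn3 : n ≠ 3 := by intro h; exact h33 (by simp [h])
      exact binom_aux 3 (by norm_num) 3 (by norm_num) (by decide) k (by omega)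
  · -- m ≥ 4
    apply binom_aux m hm 2 (by norm_num) ?_ k (by omega)
    have hsym := Nat.choose_symm (show 2 ≤ m + 2 by omega)
    have he : m + 2 - 2 = m := by omega
    rw [he] at hsym
    rw [Nat.add_comm 2 m, hsym, Nat.choose_two_right]
    have he2 : m + 2 - 1 = m + 1 := by omega
    rw [he2, Nat.div_lt_iff_lt_mul (by norm_num : 0 < 2)]
    nlinarith
end

section
/- For fixed integers n ≥ 2 and m ≥ 2, if C(n+m-1, m) < m^(n-1), then C(n+m, m+1) < (m+1)^(n-1). -/
lemma aux_binom_pow (m : ℕ) (hm : 1 ≤ m) : ∀ k : ℕ, (k + 1 + m) * m ^ k ≤ (m + 1) ^ (k + 1)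
  | 0 => by simpa using Nat.le_of_eq (by ring)
  | k + 1 => by
    have ih := aux_binom_pow m hm k
    calc (k + 1 + 1 + m) * m ^ (k + 1) = ((k + 1 + m) * m + m) * m ^ k := by ring
    _ ≤ ((k + 1 + m) * m + (k + 1 + m)) * m ^ k := by
        apply Nat.mul_le_mul_right
        omega
    _ = (m + 1) * ((k + 1 + m) * m ^ k) := by ring
    _ ≤ (m + 1) * (m + 1) ^ (k + 1) := Nat.mul_le_mul_left _ ih
    _ = (m + 1) ^ (k + 1 + 1) := by ring

/-- Induction step in m: if C(n+m-1, m) < m^(n-1) then C(n+m, m+1) < (m+1)^(n-1). -/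
theorem binom_lt_pow_step_m (m n : ℕ) (hm : 2 ≤ m) (hn : 2 ≤ n)
    (h : Nat.choose (n + m - 1) m < m ^ (n - 1)) :
    Nat.choose (n + m) (m + 1) < (m + 1) ^ (n - 1) := by
  obtain ⟨k, rfl⟩ : ∃ k, n = k + 1 := ⟨n - 1, by omega⟩
  have key : (k + m + 1) * Nat.choose (k + m) m = Nat.choose (k + m + 1) (m + 1) * (m + 1) := by
    simpa using Nat.add_one_mul_choose_eq (k + m) m
  have h2 : Nat.choose (k + m + 1) (m + 1) * (m + 1) < (m + 1) ^ k * (m + 1) := by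
    rw [← key]
    calc (k + m + 1) * Nat.choose (k + m) m < (k + m + 1) * m ^ k :=
      Nat.mul_lt_mul_of_pos_left (by simpa using h) (by omega)
    _ = (k + 1 + m) * m ^ k := by ring
    _ ≤ (m + 1) ^ (k + 1) := aux_binom_pow m (by omega) k
    _ = (m + 1) ^ k * (m + 1) := by ring
  have h3 : k + 1 + m = k + m + 1 := by omega
  rw [h3]
  exact Nat.lt_of_mul_lt_mul_right h2
end

section
/- Let f = (f_1, ..., f_n) : ℂ^n → ℂ^n be a polynomial map where each f_i is homogeneous (of possibly different positive degrees). If the only solution of f(x) = 0 is x = 0, then for every ω ∈ ℂ^n the equation f(x) = ω has a solution. -/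
/-!
Homogenize: the `n` polynomials `f i (x) - ω i * t ^ d i` in the `n + 1` variables `(x, t)`
vanish at the origin. By Krull's height theorem `n` equations cannot cut out a single point of
`ℂ^(n+1)`, whose ideal has height `n + 1`, so they have a common zero `(x, t) ≠ 0`. As the `f i`
have no common zero besides `0`, `t ≠ 0`, and by homogeneity `x / t` solves `f = ω`.
-/

namespace MvPolynomial

theorem IsHomogeneous.eval_smul {R σ : Type*} [CommSemiring R]
    {φ : MvPolynomial σ R} {n : ℕ} (hφ : φ.IsHomogeneous n) (c : R) (x : σ → R) :
    eval (c • x) φ = c ^ n * eval x φ := by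
  classical
  conv_lhs => rw [φ.as_sum]
  conv_rhs => rw [φ.as_sum]
  rw [map_sum, map_sum, Finset.mul_sum]
  refine Finset.sum_congr rfl fun u hu => ?_
  rw [eval_monomial, eval_monomial, ← hφ (mem_support_iff.mp hu)]
  simp only [Pi.smul_apply, smul_eq_mul, mul_pow, Finsupp.prod_mul]
  rw [Finsupp.prod, Finset.prod_pow_eq_pow_sum, Finsupp.weight_apply]
  simp only [Finsupp.sum, Pi.one_apply, smul_eq_mul, mul_one]
  ring

variable {K σ : Type*} [Field K]

noncomputable def translate (c : σ → K) : MvPolynomial σ K ≃ₐ[K] MvPolynomial σ K :=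
  AlgEquiv.ofAlgHom (aeval fun i => X i + C (c i)) (aeval fun i => X i - C (c i))
    (by ext i; simp) (by ext i; simp)

lemma eval_translate (c x : σ → K) (p : MvPolynomial σ K) :
    eval x (translate c p) = eval (x + c) p := by
  induction p using MvPolynomial.induction_on <;> simp_all [translate]

lemma comap_translate_vanishingIdeal_singleton (c x : σ → K) :
    (vanishingIdeal K {x}).comap (translate c) = vanishingIdeal K {x + c} := by
  ext p
  simp [eval_translate]

variable [IsAlgClosed K] [Finite σ]

lemma height_vanishingIdeal_singleton (x : σ → K) :
    (vanishingIdeal K {x} : Ideal (MvPolynomial σ K)).height = Nat.card σ := by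
  have height_eq (y : σ → K) :
      (vanishingIdeal K {y} : Ideal (MvPolynomial σ K)).height =
        (vanishingIdeal K {x}).height := by
    have := RingEquiv.height_comap (translate (x - y)).toRingEquiv (vanishingIdeal K {y})
    change (Ideal.comap (translate (x - y)) _).height = _ at this
    rwa [comap_translate_vanishingIdeal_singleton, add_sub_cancel, eq_comm] at this
  have hdim : ringKrullDim (MvPolynomial σ K) = Nat.card σ := by
    simp [ringKrullDim_eq_zero_of_field]
  apply le_antisymm
  · have := Ideal.height_le_ringKrullDim_of_ne_top
      (Ideal.IsPrime.ne_top' (I := vanishingIdeal K {x}))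
    rw [hdim] at this
    exact_mod_cast this
  · -- by the Nullstellensatz every maximal ideal is the ideal of a point
    have : ringKrullDim (MvPolynomial σ K) ≤ (vanishingIdeal K {x}).height := by
      rw [ringKrullDim_le_iff_isMaximal_height_le]
      intro M hM
      obtain ⟨y, rfl⟩ := isMaximal_iff_eq_vanishingIdeal_singleton.mp hM
      rw [height_eq]
    rw [hdim] at this
    exact_mod_cast this

theorem natCard_le_card_of_zeroLocus_eq_singleton {ι : Type*} [Fintype ι]
    (g : ι → MvPolynomial σ K) {x : σ → K}
    (h : zeroLocus K (Ideal.span (Set.range g)) = {x}) : Nat.card σ ≤ Fintype.card ι := by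
  classical
  have hrad : vanishingIdeal K {x} = (Ideal.span (Set.range g)).radical := by
    rw [← h, vanishingIdeal_zeroLocus_eq_radical]
  have hmin : vanishingIdeal K {x} ∈
      (Ideal.span ((Finset.univ.image g : Finset _) : Set _)).minimalPrimes := by
    rw [Finset.coe_image, Finset.coe_univ, Set.image_univ, ← Ideal.radical_minimalPrimes, ← hrad,
      Ideal.minimalPrimes_eq_subsingleton_self]
    rfl
  have krull := Ideal.height_le_card_of_mem_minimalPrimes_span_finset hmin
  rw [height_vanishingIdeal_singleton] at krull
  exact (Nat.cast_le.mp krull).trans Finset.card_image_le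

end MvPolynomial

open MvPolynomial

/-- Friedland's theorem: a polynomial map f = (f₁,...,f_n) : ℂⁿ → ℂⁿ whose components
are homogeneous (of positive degrees) and whose only common zero is the origin is
surjective. -/
theorem homogeneous_only_trivial_zero_surjective (n : ℕ) (d : Fin n → ℕ)
    (hd : ∀ i, 0 < d i) (f : Fin n → MvPolynomial (Fin n) ℂ)
    (hf : ∀ i, (f i).IsHomogeneous (d i))
    (h0 : ∀ x : Fin n → ℂ, (∀ i, MvPolynomial.eval x (f i) = 0) → x = 0) :
    ∀ ω : Fin n → ℂ, ∃ x : Fin n → ℂ, ∀ i, MvPolynomial.eval x (f i) = ω i := by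
  intro ω
  let F : Fin n → MvPolynomial (Fin (n + 1)) ℂ :=
    fun i => rename Fin.castSucc (f i) - C (ω i) * X (Fin.last n) ^ d i
  have hF : ∀ z, z ∈ zeroLocus ℂ (Ideal.span (Set.range F)) ↔
      ∀ i, eval (z ∘ Fin.castSucc) (f i) = ω i * z (Fin.last n) ^ d i := by
    simp [zeroLocus_span, F, eval_rename, sub_eq_zero]
  have hF0 : (0 : Fin (n + 1) → ℂ) ∈ zeroLocus ℂ (Ideal.span (Set.range F)) := by
    rw [hF]
    intro i
    simpa [zero_pow (hd i).ne'] using (hf i).eval_smul 0 0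
  obtain ⟨z, hz, hz0⟩ : ∃ z ∈ zeroLocus ℂ (Ideal.span (Set.range F)), z ≠ 0 := by
    by_contra! h
    have := natCard_le_card_of_zeroLocus_eq_singleton F
      (Set.eq_singleton_iff_unique_mem.2 ⟨hF0, h⟩)
    simp at this
  rw [hF] at hz
  have ht : z (Fin.last n) ≠ 0 := by
    intro ht
    have hy := h0 (z ∘ Fin.castSucc) (by simp [hz, ht, (hd _).ne'])
    exact hz0 (funext fun j => Fin.lastCases ht (fun j => congrFun hy j) j)
  exact ⟨(z (Fin.last n))⁻¹ • (z ∘ Fin.castSucc), fun i => by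
    rw [(hf i).eval_smul, hz, inv_pow]; field_simp⟩
end

section
/- Let m ≥ 1 and let T ∈ Λ²ℂ² ⊗ S^{m-1}ℂ² be represented by e_1∧e_2 ⊗ f for a homogeneous polynomial f(x,y) of degree m-1. Then the nonzero eigenvalues of T, i.e., the λ ≠ 0 for which there exists (x,y) ≠ (0,0) with y·f(x,y) = λx^m and -x·f(x,y) = λy^m, are exactly the numbers ω·f(1,ω) where ω ranges over the (m+1)-th roots of -1 (and f(1,ω) ≠ 0). -/
/-!
A homogeneous `f` of degree `m - 1` makes both eigenvalue equations homogeneous of degree `m`,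
so a solution may be rescaled freely. For `λ ≠ 0` a solution has `x ≠ 0`, hence rescales to
`(1, ω)`, where the equations read `ω f(1, ω) = λ` and `-f(1, ω) = λ ωᵐ`; eliminating `λ` gives
`f(1, ω) (ωᵐ⁺¹ + 1) = 0`.
-/

open MvPolynomial

theorem MvPolynomial.IsHomogeneous.eval_smul_s9 {R σ : Type*} [CommSemiring R]
    {f : MvPolynomial σ R} {n : ℕ} (hf : f.IsHomogeneous n) (c : R) (v : σ → R) :
    eval (c • v) f = c ^ n * eval v f := by
  rw [eval_eq, eval_eq, Finset.mul_sum]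
  refine Finset.sum_congr rfl fun d hd => ?_
  have hdeg : ∑ i ∈ d.support, d i = n := by
    rw [← Finsupp.degree_apply, Finsupp.degree_eq_weight_one]
    exact hf (mem_support_iff.mp hd)
  simp_rw [Pi.smul_apply, smul_eq_mul, mul_pow, Finset.prod_mul_distrib,
    Finset.prod_pow_eq_pow_sum, hdeg]
  ring

section

variable {R : Type*} [CommRing R] [IsDomain R] {f : MvPolynomial (Fin 2) R} {lam : R}

def IsWedgeEigenvector (f : MvPolynomial (Fin 2) R) (m : ℕ) (lam x y : R) : Prop :=
  y * eval ![x, y] f = lam * x ^ m ∧ -(x * eval ![x, y] f) = lam * y ^ m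

theorem IsWedgeEigenvector.fst_ne_zero {m : ℕ} {x y : R} (h : IsWedgeEigenvector f m lam x y)
    (hlam : lam ≠ 0) (hxy : (x, y) ≠ (0, 0)) : x ≠ 0 := by
  rintro rfl
  have hy : y ≠ 0 := fun hy => hxy (by rw [hy])
  have : lam * y ^ m = 0 := by simpa using h.2.symm
  exact mul_ne_zero hlam (pow_ne_zero m hy) this

theorem isWedgeEigenvector_mul_iff {n : ℕ} (hf : f.IsHomogeneous n) {c : R} (hc : c ≠ 0)
    (x y : R) :
    IsWedgeEigenvector f (n + 1) lam (c * x) (c * y) ↔ IsWedgeEigenvector f (n + 1) lam x y := by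
  have heval : eval ![c * x, c * y] f = c ^ n * eval ![x, y] f := by
    rw [← hf.eval_smul_s9, Matrix.smul_cons, Matrix.smul_cons, Matrix.smul_empty, smul_eq_mul,
      smul_eq_mul]
  have hcn : c ^ (n + 1) ≠ 0 := pow_ne_zero _ hc
  unfold IsWedgeEigenvector
  rw [heval]
  refine and_congr ?_ ?_ <;> refine Iff.trans ?_ (mul_right_inj' hcn) <;> ring_nf

theorem isWedgeEigenvector_one_iff (hlam : lam ≠ 0) {m : ℕ} (ω : R) :
    IsWedgeEigenvector f m lam 1 ω ↔
      ω ^ (m + 1) = -1 ∧ eval ![1, ω] f ≠ 0 ∧ lam = ω * eval ![1, ω] f := by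
  simp only [IsWedgeEigenvector, one_pow, mul_one, one_mul]
  set F := eval ![1, ω] f
  constructor
  · rintro ⟨hlamF, hneg⟩
    have hF : F ≠ 0 := fun hF => hlam (by rw [← hlamF, hF, mul_zero])
    refine ⟨mul_left_cancel₀ hF ?_, hF, hlamF.symm⟩
    linear_combination ω ^ m * hlamF - hneg
  · rintro ⟨hroot, -, rfl⟩
    exact ⟨rfl, by linear_combination -F * hroot⟩

end

/-- For T = e₁∧e₂ ⊗ f ∈ Λ²ℂ² ⊗ S^{m-1}ℂ² with f homogeneous of degree m-1, the nonzero
eigenvalues of T (λ ≠ 0 with a nonzero solution of y·f(x,y) = λxᵐ, -x·f(x,y) = λyᵐ)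
are exactly the numbers ω·f(1,ω) for (m+1)-th roots ω of -1 with f(1,ω) ≠ 0. -/
theorem wedge_tensor_nonzero_eigenvalues (m : ℕ) (hm : 1 ≤ m)
    (f : MvPolynomial (Fin 2) ℂ) (hf : f.IsHomogeneous (m - 1))
    (lam : ℂ) (hlam : lam ≠ 0) :
    (∃ x y : ℂ, (x, y) ≠ (0, 0) ∧
        y * MvPolynomial.eval ![x, y] f = lam * x ^ m ∧
        -(x * MvPolynomial.eval ![x, y] f) = lam * y ^ m) ↔
      ∃ ω : ℂ, ω ^ (m + 1) = -1 ∧ MvPolynomial.eval ![1, ω] f ≠ 0 ∧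
        lam = ω * MvPolynomial.eval ![1, ω] f := by
  obtain ⟨n, rfl⟩ := Nat.exists_eq_add_of_le' hm
  rw [Nat.add_sub_cancel] at hf
  constructor
  · rintro ⟨x, y, hxy, h⟩
    have hx : x ≠ 0 := IsWedgeEigenvector.fst_ne_zero h hlam hxy
    have h₁ : IsWedgeEigenvector f (n + 1) lam 1 (y / x) := by
      rw [← isWedgeEigenvector_mul_iff hf hx, mul_one, mul_div_cancel₀ _ hx]
      exact h
    exact ⟨y / x, (isWedgeEigenvector_one_iff hlam _).1 h₁⟩
  · rintro ⟨ω, hω⟩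
    exact ⟨1, ω, by simp, (isWedgeEigenvector_one_iff hlam ω).2 hω⟩
end

section
/- Let m ≥ 1 and let λ ≠ 0 and (x, y) ≠ (0, 0) satisfy y·f(x,y) = λ·x^m and -x·f(x,y) = λ·y^m for some homogeneous polynomial f of degree m-1. Then x ≠ 0 and (y/x)^{m+1} = -1. -/
/-- If λ ≠ 0 and (x,y) ≠ (0,0) satisfy the eigenvalue equations y·f(x,y) = λxᵐ and
-x·f(x,y) = λyᵐ of a tensor in Λ²ℂ² ⊗ S^{m-1}ℂ² (f homogeneous of degree m-1), then
x ≠ 0 and (y/x)^{m+1} = -1. -/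
theorem wedge_tensor_eigenvector_ratio (m : ℕ) (hm : 1 ≤ m)
    (f : MvPolynomial (Fin 2) ℂ) (hf : f.IsHomogeneous (m - 1))
    (lam x y : ℂ) (hlam : lam ≠ 0) (hxy : (x, y) ≠ (0, 0))
    (h1 : y * MvPolynomial.eval ![x, y] f = lam * x ^ m)
    (h2 : -(x * MvPolynomial.eval ![x, y] f) = lam * y ^ m) :
    x ≠ 0 ∧ (y / x) ^ (m + 1) = -1 := by
  set F := MvPolynomial.eval ![x, y] f with hF
  have key : lam * (x ^ (m + 1) + y ^ (m + 1)) = 0 := by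
    linear_combination (-x) * h1 - y * h2
  have hsum : x ^ (m + 1) + y ^ (m + 1) = 0 := by
    rcases mul_eq_zero.mp key with h | h
    · exact absurd h hlam
    · exact h
  have hx : x ≠ 0 := by
    intro hx0
    have hy : y ^ (m + 1) = 0 := by
      simpa [hx0, zero_pow (Nat.succ_ne_zero m)] using hsum
    have : y = 0 := pow_eq_zero_iff (Nat.succ_ne_zero m) |>.mp hy
    exact hxy (by simp [hx0, this])
  refine ⟨hx, ?_⟩
  have : y ^ (m + 1) = -x ^ (m + 1) := by linear_combination hsum
  rw [div_pow, this, neg_div, div_self (pow_ne_zero _ hx)]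
end

section
/- Given any multiset S of four complex numbers (with multiplicity), there exists a tensor T ∈ T(ℂ², 3) (order 3, dimension 2) whose multiset of eigenvalues, counted with algebraic multiplicity, equals S. Equivalently, the coefficient map c : ℂ⁶ → ℂ⁴ sending (a_0,a_1,a_2,b_0,b_1,b_2) to the four non-leading coefficients of the characteristic polynomial det(λI - M) of the 4×4 Sylvester-type matrix M = [[a_0,a_1,a_2,0],[0,a_0,a_1,a_2],[b_0,b_1,b_2,0],[0,b_0,b_1,b_2]] is surjective onto ℂ⁴. -/
open Polynomial Matrix

set_option maxHeartbeats 2000000 in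
lemma charpoly_M (a0 a1 a2 b0 b1 b2 : ℂ) :
    (Matrix.charpoly
      (!![a0, a1, a2, 0; 0, a0, a1, a2; b0, b1, b2, 0; 0, b0, b1, b2] :
        Matrix (Fin 4) (Fin 4) ℂ)) =
    X^4 + C (-2*a0 - 2*b2) * X^3
      + C (b2^2 - 2*a2*b0 - a1*b1 + 4*a0*b2 + a0^2) * X^2
      + C (-a2*b1^2 + 2*a2*b0*b2 + a1*b1*b2 - a1^2*b0 - 2*a0*b2^2 + 2*a0*a2*b0 + a0*a1*b1 - 2*a0^2*b2) * X
      + C (a2^2*b0^2 - a1*a2*b0*b1 + a1^2*b0*b2 + a0*a2*b1^2 - 2*a0*a2*b0*b2 - a0*a1*b1*b2 + a0^2*b2^2) := by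
  have hcm : charmatrix (!![a0, a1, a2, 0; 0, a0, a1, a2; b0, b1, b2, 0; 0, b0, b1, b2] :
        Matrix (Fin 4) (Fin 4) ℂ) =
      !![X - C a0, -C a1, -C a2, 0; 0, X - C a0, -C a1, -C a2;
         -C b0, -C b1, X - C b2, 0; 0, -C b0, -C b1, X - C b2] := by
    ext i j
    fin_cases i <;> fin_cases j <;>
      simp [charmatrix_apply_eq, charmatrix_apply_ne]
  rw [Matrix.charpoly, hcm]
  simp [Matrix.det_succ_row_zero, Fin.sum_univ_succ, Fin.succAbove, Matrix.submatrix_apply,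
    map_add, map_sub, map_neg, map_pow, Polynomial.C_mul, map_ofNat]
  ring

lemma key (w : Fin 4 → ℂ) :
    ∃ a0 a1 a2 b0 b1 b2 : ℂ,
      (Matrix.charpoly
        (!![a0, a1, a2, 0; 0, a0, a1, a2; b0, b1, b2, 0; 0, b0, b1, b2] :
          Matrix (Fin 4) (Fin 4) ℂ)) =
      X^4 + C (w 3) * X^3 + C (w 2) * X^2 + C (w 1) * X + C (w 0) := by
  obtain ⟨z, hz⟩ : ∃ z : ℂ,
      (X^4 + C (w 3) * X^3 + C (w 2) * X^2 + C (w 1) * X + C (w 0)).IsRoot z := by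
    apply Complex.exists_root
    have : (X^4 + C (w 3) * X^3 + C (w 2) * X^2 + C (w 1) * X + C (w 0) : ℂ[X]).degree = 4 := by
      compute_degree!
    rw [this]; norm_num
  have hz' : z^4 + w 3 * z^3 + w 2 * z^2 + w 1 * z + w 0 = 0 := by
    simpa using hz
  set b2 : ℂ := -(w 3)/2 - z with hb2
  set Q : ℂ := b2^2 + 4*z*b2 + z^2 - w 2 with hQ
  refine ⟨z, Q, Q*b2 + z*Q - 2*z*b2^2 - 2*z^2*b2 - w 1, 0, 1, b2, ?_⟩
  rw [charpoly_M]
  have h3 : -2*z - 2*b2 = w 3 := by rw [hb2]; ring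
  have aux : ∀ (p q r s p' q' r' s' : ℂ), p = p' → q = q' → r = r' → s = s' →
      (X^4 + C p * X^3 + C q * X^2 + C r * X + C s : ℂ[X]) =
      X^4 + C p' * X^3 + C q' * X^2 + C r' * X + C s' := by
    rintro p q r s p' q' r' s' rfl rfl rfl rfl; rfl
  apply aux
  · rw [hb2]; ring
  · rw [hQ]; ring
  · ring
  · rw [hQ, hb2]; linear_combination -hz' 

/-- Every multiset of four complex numbers is the eigenvalue multiset (with algebraic
multiplicity) of a tensor in T(ℂ²,3): equivalently, the coefficient map
ℂ⁶ → ℂ⁴ sending (a₀,a₁,a₂,b₀,b₁,b₂) to the non-leading coefficients of the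
characteristic polynomial of the 4×4 Sylvester-type matrix M is surjective. -/
theorem cubic_plane_tensor_inverse_eigenvalue :
    (∀ S : Multiset ℂ, Multiset.card S = 4 →
      ∃ a0 a1 a2 b0 b1 b2 : ℂ,
        (Matrix.charpoly
          (!![a0, a1, a2, 0; 0, a0, a1, a2; b0, b1, b2, 0; 0, b0, b1, b2] :
            Matrix (Fin 4) (Fin 4) ℂ)).roots = S) ∧
    (∀ w : Fin 4 → ℂ,
      ∃ a0 a1 a2 b0 b1 b2 : ℂ, ∀ i : Fin 4,
        (Matrix.charpoly
          (!![a0, a1, a2, 0; 0, a0, a1, a2; b0, b1, b2, 0; 0, b0, b1, b2] :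
            Matrix (Fin 4) (Fin 4) ℂ)).coeff (i : ℕ) = w i) := by
  constructor
  · intro S hS
    set p : ℂ[X] := (S.map fun r => X - C r).prod with hp
    have hmonic : p.Monic := by
      exact monic_multiset_prod_of_monic S _ fun r _ => monic_X_sub_C r
    have hdeg : p.natDegree = 4 := by
      rw [hp, natDegree_multiset_prod_X_sub_C_eq_card, hS]
    obtain ⟨a0, a1, a2, b0, b1, b2, hcp⟩ := key (fun i => p.coeff i)
    refine ⟨a0, a1, a2, b0, b1, b2, ?_⟩
    have hps : p = X^4 + C (p.coeff 3) * X^3 + C (p.coeff 2) * X^2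
        + C (p.coeff 1) * X + C (p.coeff 0) := by
      have h4 : p.coeff 4 = 1 := by
        have := hmonic.leadingCoeff
        rwa [leadingCoeff, hdeg] at this
      conv_lhs => rw [p.as_sum_range' 5 (by omega)]
      simp only [Finset.sum_range_succ, Finset.sum_range_zero, h4,
        ← C_mul_X_pow_eq_monomial, Polynomial.C_1]
      ring
    have : (Matrix.charpoly
        (!![a0, a1, a2, 0; 0, a0, a1, a2; b0, b1, b2, 0; 0, b0, b1, b2] :
          Matrix (Fin 4) (Fin 4) ℂ)) = p := by
      rw [hcp]; exact hps.symm
    rw [this, hp, roots_multiset_prod_X_sub_C]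
  · intro w
    obtain ⟨a0, a1, a2, b0, b1, b2, hcp⟩ := key w
    refine ⟨a0, a1, a2, b0, b1, b2, ?_⟩
    intro i
    rw [hcp]
    fin_cases i <;>
      simp [coeff_add, coeff_C_mul, coeff_X_pow, coeff_C, coeff_X]
end

section
/- Consider the coefficient map c = (c_1,c_2,c_3,c_4) of the characteristic polynomial det(λI − M) of the Sylvester matrix M = [[a_0,a_1,a_2,0],[0,a_0,a_1,a_2],[b_0,b_1,b_2,0],[0,b_0,b_1,b_2]], restricted to the linear subspace L ⊂ ℂ⁶ defined by a_1 + b_1 + b_2 = 0 and a_2 + b_0 = 0. Then the only point of L where all four coefficients c_1, c_2, c_3, c_4 vanish is the origin. -/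
set_option maxHeartbeats 4000000

open Polynomial Matrix

/-- Key algebraic lemma: the reduced nilpotency equations in three variables
force the origin. -/
lemma key_alg (a1 a2 b2 : ℂ)
    (E1 : a2 * (b2 * (b2 + 2 * a1)) = 0)
    (E2 : -2 * b2 ^ 2 + 2 * a2 ^ 2 + a1 * b2 + a1 ^ 2 = 0)
    (E0 : b2 ^ 4 - a2 * b2 ^ 3 - 2 * a2 ^ 2 * b2 ^ 2 + a2 ^ 4 - a1 * b2 ^ 3
      - 2 * a1 * a2 * b2 ^ 2 - a1 * a2 ^ 2 * b2 - a1 ^ 2 * b2 ^ 2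
      - 2 * a1 ^ 2 * a2 * b2 - a1 ^ 2 * a2 ^ 2 = 0) :
    a1 = 0 ∧ a2 = 0 ∧ b2 = 0 := by
  rcases mul_eq_zero.mp E1 with ha2 | h
  · -- a2 = 0
    subst ha2
    have hE2 : (a1 + 2 * b2) * (a1 - b2) = 0 := by linear_combination E2
    rcases mul_eq_zero.mp hE2 with h | h
    · have ha1 : a1 = -2 * b2 := by linear_combination h
      subst ha1
      have hb2 : b2 ^ 4 = 0 := by linear_combination -E0
      have hb2' : b2 = 0 := pow_eq_zero_iff (n := 4) (by norm_num) |>.mp hb2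
      subst hb2'
      refine ⟨by ring, rfl, rfl⟩
    · have ha1 : a1 = b2 := by linear_combination h
      subst ha1
      have hb2 : a1 ^ 4 = 0 := by linear_combination -E0
      have hb2' : a1 = 0 := pow_eq_zero_iff (n := 4) (by norm_num) |>.mp hb2
      exact ⟨hb2', rfl, hb2'⟩
  · rcases mul_eq_zero.mp h with hb2 | h
    · -- b2 = 0
      subst hb2
      have ha2 : a2 ^ 4 = 0 := by linear_combination (1/3 : ℂ) * E0 + (a2 ^ 2 / 3) * E2
      have ha2' : a2 = 0 := pow_eq_zero_iff (n := 4) (by norm_num) |>.mp ha2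
      have ha1 : a1 ^ 2 = 0 := by linear_combination E2 - (2 * a2) * ha2'
      exact ⟨pow_eq_zero_iff (n := 2) (by norm_num) |>.mp ha1, ha2', rfl⟩
    · -- b2 = -2*a1
      have hb2 : b2 = -2 * a1 := by linear_combination h
      subst hb2
      have h4 : 4 * a1 ^ 3 * a2 + 35 / 4 * a1 ^ 4 = 0 := by
        linear_combination E0 - (1 / 2 * a2 ^ 2 - 5 / 4 * a1 ^ 2) * E2
      have ha1 : a1 ^ 8 = 0 := by
        linear_combination (-16 / 73 : ℂ) * (4 * a1 ^ 3 * a2 - 35 / 4 * a1 ^ 4) * h4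
          + (16 / 73 * 8 * a1 ^ 6 : ℂ) * E2
      have ha1' : a1 = 0 := pow_eq_zero_iff (n := 8) (by norm_num) |>.mp ha1
      subst ha1'
      have ha2 : a2 ^ 2 = 0 := by linear_combination (1 / 2 : ℂ) * E2
      exact ⟨rfl, pow_eq_zero_iff (n := 2) (by norm_num) |>.mp ha2, by ring⟩

/-- On the linear subspace L ⊂ ℂ⁶ defined by a₁+b₁+b₂ = 0 and a₂+b₀ = 0, the only
point where all four non-leading coefficients of the characteristic polynomial of the
Sylvester matrix M vanish is the origin. -/
theorem sylvester_nilpotent_on_subspace_trivial (a0 a1 a2 b0 b1 b2 : ℂ)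
    (hL1 : a1 + b1 + b2 = 0) (hL2 : a2 + b0 = 0)
    (hc : ∀ i : Fin 4,
      (Matrix.charpoly
        (!![a0, a1, a2, 0; 0, a0, a1, a2; b0, b1, b2, 0; 0, b0, b1, b2] :
          Matrix (Fin 4) (Fin 4) ℂ)).coeff (i : ℕ) = 0) :
    a0 = 0 ∧ a1 = 0 ∧ a2 = 0 ∧ b0 = 0 ∧ b1 = 0 ∧ b2 = 0 := by
  have hM : Matrix.charpoly
        (!![a0, a1, a2, 0; 0, a0, a1, a2; b0, b1, b2, 0; 0, b0, b1, b2] :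
          Matrix (Fin 4) (Fin 4) ℂ)
    = X^4 + C (-2*b2 - 2*a0) * X^3 + C (b2^2 - 2*a2*b0 - a1*b1 + 4*a0*b2 + a0^2) * X^2
      + C (-a2*b1^2 + 2*a2*b0*b2 + a1*b1*b2 - a1^2*b0 - 2*a0*b2^2 + 2*a0*a2*b0 + a0*a1*b1 - 2*a0^2*b2) * X
      + C (a2^2*b0^2 - a1*a2*b0*b1 + a1^2*b0*b2 + a0*a2*b1^2 - 2*a0*a2*b0*b2 - a0*a1*b1*b2 + a0^2*b2^2) := by
    simp [Matrix.charpoly, Matrix.charmatrix, Matrix.det_succ_row_zero, Fin.sum_univ_succ,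
      Matrix.diagonal]
    norm_num [Fin.succ, Fin.succAbove, Fin.castSucc, Fin.castAdd, Fin.castLE, Fin.ext_iff,
      Fin.lt_def, map_ofNat]
    ring
  have h3 := hc 3
  have h2 := hc 2
  have h1 := hc 1
  have h0 := hc 0
  rw [hM] at h3 h2 h1 h0
  simp only [show ((3 : Fin 4) : ℕ) = 3 from rfl, show ((2 : Fin 4) : ℕ) = 2 from rfl,
    show ((1 : Fin 4) : ℕ) = 1 from rfl, show ((0 : Fin 4) : ℕ) = 0 from rfl,
    coeff_add, coeff_C_mul, coeff_X_pow, coeff_C, coeff_X] at h3 h2 h1 h0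
  norm_num at h3 h2 h1 h0
  have ha0 : a0 = -b2 := by linear_combination (-1/2 : ℂ) * h3
  have hb1 : b1 = -a1 - b2 := by linear_combination hL1
  have hb0 : b0 = -a2 := by linear_combination hL2
  subst ha0 hb1 hb0
  have E1 : a2 * (b2 * (b2 + 2 * a1)) = 0 := by linear_combination -h1
  have E2 : -2 * b2 ^ 2 + 2 * a2 ^ 2 + a1 * b2 + a1 ^ 2 = 0 := by linear_combination h2
  have E0 : b2 ^ 4 - a2 * b2 ^ 3 - 2 * a2 ^ 2 * b2 ^ 2 + a2 ^ 4 - a1 * b2 ^ 3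
      - 2 * a1 * a2 * b2 ^ 2 - a1 * a2 ^ 2 * b2 - a1 ^ 2 * b2 ^ 2
      - 2 * a1 ^ 2 * a2 * b2 - a1 ^ 2 * a2 ^ 2 = 0 := by linear_combination h0
  obtain ⟨ha1, ha2, hb2⟩ := key_alg a1 a2 b2 E1 E2 E0
  refine ⟨by rw [hb2]; ring, ha1, ha2, by rw [ha2]; ring, by rw [ha1, hb2]; ring, hb2⟩
end
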